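/- Let (V, E, s, t) be a finite directed multigraph with V nonempty which is weakly connected (every two vertices are related by the reflexive–transitive closure of the symmetrized edge relation). Then the following three conditions are equivalent: (i) the graph is strongly connected, i.e. for every pair of vertices u, v, there is a directed path from u to v; (ii) every edge lies in a directed cycle, i.e. for every edge e the vertex t(e) reaches s(e) by a directed path; (iii) there exists a coloring c : E → ℕ with c(e) > 0 for every edge e such that for every vertex v, the sum of c(e) over edges e with t(e) = v equals the sum of c(e) over edges e with s(e) = v. -/
import Mathlib


private lemma walk_count {V E : Type} [DecidableEq V] (s t : E → V) {u v : V}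
    (h : Relation.ReflTransGen (fun a b => ∃ e, s e = a ∧ t e = b) u v) :
    ∃ L : List E, ∀ x : V,
      L.countP (fun e => decide (t e = x)) + (if u = x then 1 else 0)
      = L.countP (fun e => decide (s e = x)) + (if v = x then 1 else 0) := by
  induction h with
  | refl => exact ⟨[], fun x => rfl⟩
  | @tail b c hab step ih =>
    obtain ⟨e, he1, he2⟩ := step
    obtain ⟨L, hL⟩ := ih
    refine ⟨e :: L, fun x => ?_⟩
    have key := hL x
    simp only [List.countP_cons, he1, he2, decide_eq_true_eq]
    by_cases h1 : b = x <;> by_cases h2 : c = x <;> by_cases h3 : u = x <;>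
      simp only [h1, h2, h3, if_pos, if_neg, if_true, if_false] at * <;> simp_all

private lemma countP_eq_sum {E : Type} [Fintype E] [DecidableEq E]
    (p : E → Prop) [DecidablePred p] (L : List E) :
    L.countP (fun e => decide (p e)) = ∑ e ∈ Finset.univ.filter p, L.count e := by
  induction L with
  | nil => simp
  | cons a L ih =>
    simp only [List.countP_cons, List.count_cons, Finset.sum_add_distrib, ih]
    congr 1
    simp only [beq_iff_eq]
    rw [Finset.sum_ite_eq]
    simp

/-- For a finite, nonempty, weakly connected directed multigraph
`(V, E, s, t)`, the following are equivalent: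
(i) strong connectivity, (ii) every edge lies in a directed cycle,
(iii) there is a balanced positive coloring. -/
theorem strongly_connected_tfae
    {V E : Type} [Fintype V] [Fintype E] [DecidableEq V]
    (s t : E → V)
    (hne : Nonempty V)
    (hweak : ∀ u v : V,
      Relation.ReflTransGen
        (fun a b => (∃ e, s e = a ∧ t e = b) ∨ (∃ e, s e = b ∧ t e = a)) u v) :
    [ (∀ u v : V, Relation.ReflTransGen (fun a b => ∃ e, s e = a ∧ t e = b) u v),
      (∀ e : E, Relation.ReflTransGen (fun a b => ∃ e', s e' = a ∧ t e' = b) (t e) (s e)),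
      (∃ c : E → ℕ, (∀ e, 0 < c e) ∧
        ∀ v : V, ∑ e ∈ Finset.univ.filter (fun e => t e = v), c e
               = ∑ e ∈ Finset.univ.filter (fun e => s e = v), c e) ].TFAE := by
  classical
  tfae_have 1 → 2 := fun h1 e => h1 (t e) (s e)
  tfae_have 2 → 1 := by
    intro h2 u v
    induction hweak u v with
    | refl => exact .refl
    | tail hab step ih =>
      rcases step with ⟨e, he1, he2⟩ | ⟨e, he1, he2⟩
      · exact ih.tail ⟨e, he1, he2⟩
      · exact ih.trans (he2 ▸ he1 ▸ h2 e)
  tfae_have 2 → 3 := by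
    intro h2
    choose L hL using fun e => walk_count s t (h2 e)
    refine ⟨fun e => ∑ e0 : E, ((e0 :: L e0).count e), fun e => ?_, fun v => ?_⟩
    · have h1 : 0 < (e :: L e).count e := by simp [List.count_cons]
      exact lt_of_lt_of_le h1
        (Finset.single_le_sum (f := fun e0 => ((e0 :: L e0).count e))
          (fun _ _ => Nat.zero_le _) (Finset.mem_univ e))
    · rw [Finset.sum_comm (s := Finset.univ.filter (fun e => t e = v)) (t := Finset.univ)]
      rw [Finset.sum_comm (s := Finset.univ.filter (fun e => s e = v)) (t := Finset.univ)]
      refine Finset.sum_congr rfl fun e0 _ => ?_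
      rw [← countP_eq_sum, ← countP_eq_sum]
      have key := hL e0 v
      simp only [List.countP_cons, decide_eq_true_eq] at *
      by_cases h1 : t e0 = v <;> by_cases h2 : s e0 = v <;> simp [h1, h2] at * <;> omega
  tfae_have 3 → 2 := by
    intro h3 e0
    obtain ⟨c, hcpos, hbal⟩ := h3
    set S : Finset V :=
      Finset.univ.filter
        (fun v => Relation.ReflTransGen (fun a b => ∃ e, s e = a ∧ t e = b) (t e0) v)
      with hS
    have hmemS : ∀ v, v ∈ S ↔
        Relation.ReflTransGen (fun a b => ∃ e, s e = a ∧ t e = b) (t e0) v := by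
      intro v; simp [hS]
    have fib : ∀ f : E → V,
        ∑ v ∈ S, ∑ e ∈ Finset.univ.filter (fun e => f e = v), c e
        = ∑ e ∈ Finset.univ.filter (fun e => f e ∈ S), c e := by
      intro f
      rw [← Finset.sum_fiberwise_of_maps_to (g := f)
        (fun e he => (Finset.mem_filter.1 he).2) c]
      refine Finset.sum_congr rfl fun v hv => Finset.sum_congr ?_ fun _ _ => rfl
      ext e
      simp only [Finset.mem_filter, Finset.mem_univ, true_and]
      constructor
      · intro h; exact ⟨h ▸ hv, h⟩
      · intro h; exact h.2
    have key : ∑ e ∈ Finset.univ.filter (fun e => t e ∈ S), c e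
        = ∑ e ∈ Finset.univ.filter (fun e => s e ∈ S), c e := by
      rw [← fib t, ← fib s]
      exact Finset.sum_congr rfl fun v _ => hbal v
    have hsub : Finset.univ.filter (fun e => s e ∈ S)
        ⊆ Finset.univ.filter (fun e => t e ∈ S) := by
      intro e he
      simp only [Finset.mem_filter, Finset.mem_univ, true_and, hmemS] at *
      exact he.tail ⟨e, rfl, rfl⟩
    have hsub2 : Finset.univ.filter (fun e => t e ∈ S)
        ⊆ Finset.univ.filter (fun e => s e ∈ S) := by
      by_contra hcon
      obtain ⟨e, heA, heB⟩ := Finset.not_subset.1 hcon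
      exact absurd key (Nat.ne_of_gt (Finset.sum_lt_sum_of_subset hsub heA heB
        (hcpos e) (fun _ _ _ => Nat.zero_le _)))
    have : e0 ∈ Finset.univ.filter (fun e => t e ∈ S) := by
      simp only [Finset.mem_filter, Finset.mem_univ, true_and, hmemS]
      exact .refl
    have := hsub2 this
    simp only [Finset.mem_filter, Finset.mem_univ, true_and, hmemS] at this
    exact this
  tfae_finish
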